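/- For any unitary U on ℂ^N, (U ⊗ I^{⊗(N−1)}) |S_N⟩ = (det U) · (I ⊗ (U†)^{⊗(N−1)}) |S_N⟩, where |S_N⟩ is the N-level singlet in (ℂ^N)^{⊗N}. -/

import Mathlib

/-- The `N`-level singlet `(1/√N!) Σ_{σ∈S_N} sgn(σ) e_{σ(1)} ⊗ ⋯ ⊗ e_{σ(N)}`. -/
noncomputable def singlet (N : ℕ) : EuclideanSpace ℂ (Fin N → Fin N) :=
  ((Real.sqrt N.factorial : ℂ))⁻¹ • ∑ σ : Equiv.Perm (Fin N),
    ((Equiv.Perm.sign σ : ℤ) : ℂ) • EuclideanSpace.single (⇑σ) (1 : ℂ)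

/-- The action of `I ⊗ ⋯ ⊗ U ⊗ ⋯ ⊗ I` (the matrix `U` acting on the `k`-th tensor
factor only) on `(ℂ^d)^{⊗N}`. -/
noncomputable def applyAt {d N : ℕ} (k : Fin N) (U : Matrix (Fin d) (Fin d) ℂ)
    (ψ : EuclideanSpace ℂ (Fin N → Fin d)) : EuclideanSpace ℂ (Fin N → Fin d) :=
  WithLp.toLp 2 fun f => ∑ a : Fin d, U (f k) a * ψ (Function.update f k a)

/-- The action of `V` on every tensor factor except the `k`-th (where the identity
acts) on `(ℂ^d)^{⊗N}`. -/
noncomputable def applyExcept {d N : ℕ} (k : Fin N) (V : Matrix (Fin d) (Fin d) ℂ)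
    (ψ : EuclideanSpace ℂ (Fin N → Fin d)) : EuclideanSpace ℂ (Fin N → Fin d) :=
  WithLp.toLp 2 fun f => ∑ g : Fin N → Fin d,
    if g k = f k then (∏ i ∈ Finset.univ.erase k, V (f i) (g i)) * ψ g else 0

/-!
By the Leibniz formula, a tensor product of operators `A 0 ⊗ ⋯ ⊗ A (N - 1)` maps the singlet to
the tensor whose `f`-component is `det [A i (f i) j]ᵢⱼ / √N!`. For `(U, 1, …, 1)` this row matrix
is the one for `(1, U†, …, U†)` multiplied on the right by `U`, because `U† U = 1`;
multiplicativity of the determinant produces the factor `det U`.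
-/

open Finset Matrix

lemma Matrix.of_rows_mul {l m n p R : Type*} [Fintype n] [NonUnitalNonAssocSemiring R]
    (A : m → Matrix l n R) (f : m → l) (B : Matrix n p R) :
    (Matrix.of fun i j => A i (f i) j) * B = Matrix.of fun i j => (A i * B) (f i) j := by
  ext i j
  simp [mul_apply]

/-- The operator `A 0 ⊗ ⋯ ⊗ A (N - 1)` on `(ℂ^d)^{⊗N}`. -/
noncomputable def applyEach {d N : ℕ} (A : Fin N → Matrix (Fin d) (Fin d) ℂ)
    (ψ : EuclideanSpace ℂ (Fin N → Fin d)) : EuclideanSpace ℂ (Fin N → Fin d) :=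
  WithLp.toLp 2 fun f => ∑ g : Fin N → Fin d, (∏ i, A i (f i) (g i)) * ψ g

section

variable {d N : ℕ}

lemma prod_update_one_eq_sum (k : Fin N) (U : Matrix (Fin d) (Fin d) ℂ) (f g : Fin N → Fin d) :
    ∏ i, Function.update (fun _ => (1 : Matrix (Fin d) (Fin d) ℂ)) k U i (f i) (g i) =
      ∑ a, U (f k) a * if Function.update f k a = g then 1 else 0 := by
  classical
  have hrest : ∀ i ∈ univ.erase k,
      Function.update (fun _ => (1 : Matrix (Fin d) (Fin d) ℂ)) k U i (f i) (g i) =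
        if f i = g i then 1 else 0 := fun i hi => by
    rw [Function.update_of_ne (ne_of_mem_erase hi), one_apply]
  rw [← mul_prod_erase _ _ (mem_univ k), prod_congr rfl hrest]
  simp only [Function.update_self, prod_boole, Function.update_eq_iff, ite_and,
    sum_ite_eq', mem_univ, if_true, mem_erase, and_true, mul_ite, mul_one, mul_zero]

lemma applyAt_eq_applyEach (k : Fin N) (U : Matrix (Fin d) (Fin d) ℂ)
    (ψ : EuclideanSpace ℂ (Fin N → Fin d)) :
    applyAt k U ψ = applyEach (Function.update (fun _ => 1) k U) ψ := by
  ext f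
  simp only [applyAt, applyEach, prod_update_one_eq_sum, sum_mul, mul_assoc, ite_mul,
    one_mul, zero_mul]
  rw [sum_comm]
  simp

lemma applyExcept_eq_applyEach (k : Fin N) (V : Matrix (Fin d) (Fin d) ℂ)
    (ψ : EuclideanSpace ℂ (Fin N → Fin d)) :
    applyExcept k V ψ = applyEach (Function.update (fun _ => V) k 1) ψ := by
  ext f
  refine sum_congr rfl fun g _ => ?_
  have hrest : ∀ i ∈ univ.erase k, Function.update (fun _ => V) k 1 i (f i) (g i) = V (f i) (g i) :=
    fun i hi => by rw [Function.update_of_ne (ne_of_mem_erase hi)]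
  rw [← mul_prod_erase _ _ (mem_univ k), prod_congr rfl hrest]
  simp [one_apply, eq_comm]

end

lemma singlet_apply (N : ℕ) (g : Fin N → Fin N) :
    singlet N g = (Real.sqrt N.factorial : ℂ)⁻¹ *
      ∑ σ : Equiv.Perm (Fin N), if g = ⇑σ then ((Equiv.Perm.sign σ : ℤ) : ℂ) else 0 := by
  simp [singlet, WithLp.ofLp_sum, Pi.single_apply]

lemma applyEach_singlet_apply {N : ℕ} (A : Fin N → Matrix (Fin N) (Fin N) ℂ) (f : Fin N → Fin N) :
    applyEach A (singlet N) f =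
      (Real.sqrt N.factorial : ℂ)⁻¹ * (Matrix.of fun i j => A i (f i) j).det := by
  rw [← det_transpose, det_apply]
  simp only [applyEach, singlet_apply, mul_sum, mul_ite, mul_zero]
  rw [sum_comm]
  simp [sum_ite_eq', Units.smul_def, mul_comm, mul_left_comm]

/-- For any unitary `U` on `ℂ^N`,
`(U ⊗ I^{⊗(N−1)}) |S_N⟩ = (det U) · (I ⊗ (U†)^{⊗(N−1)}) |S_N⟩`. -/
theorem singlet_first_factor_unitary_transfer
    {N : ℕ} (hN : 0 < N) (U : Matrix (Fin N) (Fin N) ℂ)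
    (hU : U ∈ Matrix.unitaryGroup (Fin N) ℂ) :
    applyAt ⟨0, hN⟩ U (singlet N) =
      U.det • applyExcept ⟨0, hN⟩ U.conjTranspose (singlet N) := by
  set k : Fin N := ⟨0, hN⟩
  have hUU : Uᴴ * U = 1 := Matrix.mem_unitaryGroup_iff'.mp hU
  have hrows : ∀ i, Function.update (fun _ => Uᴴ) k 1 i * U =
      Function.update (fun _ => (1 : Matrix (Fin N) (Fin N) ℂ)) k U i := by
    intro i
    rcases eq_or_ne i k with rfl | hi
    · simp
    · simp [Function.update_of_ne hi, hUU]
  ext f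
  rw [applyAt_eq_applyEach, applyExcept_eq_applyEach, PiLp.smul_apply, smul_eq_mul,
    applyEach_singlet_apply, applyEach_singlet_apply, mul_left_comm, mul_comm U.det, ← det_mul,
    of_rows_mul]
  simp only [hrows]
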